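/- arXiv:2101.01312 — 10 statements merged into one kernel-verified Lean document; each statement's English description precedes it below -/
import Mathlib

section
/- Let h : τ → Option τ. If T is a deadlock cycle, then for every t0 ∈ T there exists n with 1 ≤ n ≤ T.card such that walk t0 n = some t0. (Combinatorial content of the paper's Theorem 5.6 together with Lemma 5.5: the detector's traversal starting from any task in a deadlock cycle terminates and returns to that task, so the assertion fails and an alarm is raised.) -/
/-- A finite set of tasks is deadlocked if it is nonempty and every task in it
waits (via the waits-for map `h`) on some task also in the set. -/
def Deadlocked {τ : Type*} (h : τ → Option τ) (T : Finset τ) : Prop :=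
  T.Nonempty ∧ ∀ t ∈ T, ∃ t' ∈ T, h t = some t'

/-- A deadlock cycle is a deadlocked set that is minimal: no nonempty strict
subset of it is deadlocked. -/
def DeadlockCycle {τ : Type*} (h : τ → Option τ) (T : Finset τ) : Prop :=
  Deadlocked h T ∧ ∀ S : Finset τ, S ⊂ T → S.Nonempty → ¬ Deadlocked h S

/-- The detector's traversal: `walk h t0 n` follows the waits-for map `h`
for `n` steps starting from `t0`. -/
def walk {τ : Type*} (h : τ → Option τ) (t0 : τ) : ℕ → Option τ
  | 0 => some t0
  | n + 1 => (walk h t0 n).bind h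

/-- From any task in a deadlock cycle, the detector's traversal returns
to that task within `T.card` steps. -/
theorem stmt_1 {τ : Type*} (h : τ → Option τ) (T : Finset τ)
    (hT : DeadlockCycle h T) :
    ∀ t0 ∈ T, ∃ n, 1 ≤ n ∧ n ≤ T.card ∧ walk h t0 n = some t0 := by
  obtain ⟨⟨hne, hwait⟩, hmin⟩ := hT
  intro t0 ht0
  have key : ∀ n, ∃ t, walk h t0 n = some t ∧ t ∈ T := by
    intro n
    induction n with
    | zero => exact ⟨t0, rfl, ht0⟩
    | succ n ih =>
      obtain ⟨t, hw, htT⟩ := ih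
      obtain ⟨t', ht'T, ht'⟩ := hwait t htT
      exact ⟨t', by simp [walk, hw, ht'], ht'T⟩
  classical
  set g : ℕ → τ := fun n => (key n).choose with hgdef
  have hgw : ∀ n, walk h t0 n = some (g n) := fun n => (key n).choose_spec.1
  have hgT : ∀ n, g n ∈ T := fun n => (key n).choose_spec.2
  have hstep : ∀ n, h (g n) = some (g (n + 1)) := by
    intro n
    have hw := hgw (n + 1)
    rw [walk, hgw n] at hw
    simpa using hw
  have hg0 : g 0 = t0 := by
    have hw := hgw 0
    have : (some t0 : Option τ) = some (g 0) := hw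
    exact (Option.some_injective _ this).symm
  -- pigeonhole: a repeat among indices 0..T.card
  obtain ⟨a, ha, b, hb, hab, heq⟩ :=
    Finset.exists_ne_map_eq_of_card_lt_of_maps_to
      (s := Finset.range (T.card + 1)) (t := T) (by simp)
      (fun n _ => hgT n)
  simp only [Finset.mem_range] at ha hb
  have hP : ∃ j, ∃ i < j, g i = g j := by
    rcases lt_or_gt_of_ne hab with hlt | hlt
    · exact ⟨b, a, hlt, heq⟩
    · exact ⟨a, b, hlt, heq.symm⟩
  set j := Nat.find hP with hjdef
  obtain ⟨i, hij, hgi⟩ := Nat.find_spec hP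
  have hjle : j ≤ T.card := by
    rcases lt_or_gt_of_ne hab with hlt | hlt
    · have := Nat.find_min' hP ⟨a, hlt, heq⟩
      omega
    · have := Nat.find_min' hP ⟨b, hlt, heq.symm⟩
      omega
  have hdistinct : ∀ m m', m < m' → m' < j → g m ≠ g m' := by
    intro m m' hmm' hm'j hgeq
    exact Nat.find_min hP hm'j ⟨m, hmm', hgeq⟩
  -- the cycle set
  set C : Finset τ := (Finset.Ico i j).image g with hCdef
  have hCsub : C ⊆ T := by
    intro x hx
    simp only [hCdef, Finset.mem_image] at hx
    obtain ⟨m, _, rfl⟩ := hx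
    exact hgT m
  have hCne : C.Nonempty := ⟨g i, by
    simp only [hCdef, Finset.mem_image]
    exact ⟨i, Finset.mem_Ico.2 ⟨le_refl i, hij⟩, rfl⟩⟩
  have hCdead : Deadlocked h C := by
    refine ⟨hCne, ?_⟩
    intro t ht
    simp only [hCdef, Finset.mem_image, Finset.mem_Ico] at ht
    obtain ⟨m, ⟨him, hmj⟩, rfl⟩ := ht
    by_cases hm1 : m + 1 < j
    · refine ⟨g (m + 1), ?_, hstep m⟩
      simp only [hCdef, Finset.mem_image, Finset.mem_Ico]
      exact ⟨m + 1, ⟨by omega, hm1⟩, rfl⟩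
    · have hm1j : m + 1 = j := by omega
      refine ⟨g i, ?_, ?_⟩
      · simp only [hCdef, Finset.mem_image, Finset.mem_Ico]
        exact ⟨i, ⟨le_refl i, hij⟩, rfl⟩
      · rw [hstep m, hm1j, hgi]
  have hCeq : C = T := by
    by_contra hne'
    exact hmin C (Finset.ssubset_iff_subset_ne.2 ⟨hCsub, hne'⟩) hCne hCdead
  have ht0C : t0 ∈ C := hCeq ▸ ht0
  simp only [hCdef, Finset.mem_image, Finset.mem_Ico] at ht0C
  obtain ⟨k, ⟨hik, hkj⟩, hkt0⟩ := ht0C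
  have hk0 : k = 0 := by
    by_contra hk0
    exact hdistinct 0 k (by omega) hkj (by rw [hg0, hkt0])
  have hi0 : i = 0 := by omega
  refine ⟨j, by omega, hjle, ?_⟩
  rw [hgw j, ← hgi, hi0, hg0]
end

section
/- Let h : τ → Option τ. If T is deadlocked and t0 ∈ T, then for every natural number n there exists t ∈ T with walk t0 n = some t; that is, the detector's traversal started inside a deadlocked set is defined at every step and never leaves the set. (Combinatorial content of the paper's Lemma 5.4.) -/
/-- The detector's traversal started inside a deadlocked set is defined at
every step and never leaves the set. -/
theorem stmt_2 {τ : Type*} (h : τ → Option τ) (T : Finset τ)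
    (hT : Deadlocked h T) (t0 : τ) (ht0 : t0 ∈ T) :
    ∀ n : ℕ, ∃ t ∈ T, walk h t0 n = some t := by
  intro n
  induction n with
  | zero => exact ⟨t0, ht0, rfl⟩
  | succ n ih =>
    obtain ⟨t, htT, hwalk⟩ := ih
    obtain ⟨t', ht'T, ht'⟩ := hT.2 t htT
    exact ⟨t', ht'T, by simp [walk, hwalk, ht']⟩
end

section
/- Let h : τ → Option τ. There exist a task t0 and an integer n ≥ 1 with walk t0 n = some t0 if and only if there exists a deadlocked finite set of tasks. (Combinatorial content of the paper's Corollary to Theorems 5.1 and 5.6: the detection algorithm raises an alarm exactly when a deadlock exists.) -/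
lemma walk_add {τ : Type*} (h : τ → Option τ) (t0 : τ) (m n : ℕ) :
    walk h t0 (m + n) = (walk h t0 m).bind (fun t => walk h t n) := by
  induction n with
  | zero => cases hw : walk h t0 m <;> simp [walk, hw]
  | succ n ih =>
    show walk h t0 (m + n + 1) = _
    rw [walk, ih]
    cases walk h t0 m <;> simp [walk]

/-- The detection algorithm raises an alarm (the traversal returns to its
start) exactly when a deadlocked finite set of tasks exists. -/
theorem stmt_3 {τ : Type*} (h : τ → Option τ) :
    (∃ (t0 : τ) (n : ℕ), 1 ≤ n ∧ walk h t0 n = some t0) ↔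
      ∃ T : Finset τ, Deadlocked h T := by
  classical
  constructor
  · rintro ⟨t0, n, hn, hcyc⟩
    -- every prefix of the walk is `some`
    have hs : ∀ k ≤ n, ∃ t, walk h t0 k = some t := by
      intro k hk
      obtain ⟨m, rfl⟩ := Nat.exists_eq_add_of_le hk
      rw [walk_add] at hcyc
      cases hwk : walk h t0 k with
      | none => rw [hwk] at hcyc; simp at hcyc
      | some t => exact ⟨t, rfl⟩
    set f : ℕ → τ := fun k => (walk h t0 k).getD t0 with hf
    have hfw : ∀ k ≤ n, walk h t0 k = some (f k) := by
      intro k hk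
      obtain ⟨t, ht⟩ := hs k hk
      simp [hf, ht]
    have hf0 : f 0 = t0 := by simp [hf, walk]
    refine ⟨(Finset.range n).image f, ⟨f 0, Finset.mem_image_of_mem f (Finset.mem_range.mpr hn)⟩, ?_⟩
    intro t ht
    obtain ⟨k, hk, rfl⟩ := Finset.mem_image.mp ht
    rw [Finset.mem_range] at hk
    have hwk1 : walk h t0 (k + 1) = h (f k) := by
      rw [walk, hfw k (le_of_lt hk)]; rfl
    rcases eq_or_lt_of_le (Nat.succ_le_of_lt hk) with heq | hlt
    · refine ⟨f 0, Finset.mem_image_of_mem f (Finset.mem_range.mpr hn), ?_⟩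
      rw [← hwk1, show k + 1 = n from heq, hcyc, hf0]
    · refine ⟨f (k + 1), Finset.mem_image_of_mem f (Finset.mem_range.mpr hlt), ?_⟩
      rw [← hwk1, hfw (k + 1) (le_of_lt hlt)]
  · rintro ⟨T, ⟨t0, ht0⟩, hstep⟩
    choose g hgT hgh using hstep
    set G : ↑T → ↑T := fun x => ⟨g x.1 x.2, hgT x.1 x.2⟩ with hG
    have hwalk : ∀ (x : ↑T) (m : ℕ), walk h ↑x m = some ↑(G^[m] x) := by
      intro x m
      induction m with
      | zero => simp [walk]
      | succ m ih =>
        rw [walk, ih, Function.iterate_succ_apply']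
        exact hgh _ _
    haveI : Finite ↑T := Finset.finite_toSet T |>.to_subtype
    obtain ⟨i, j, hne, heq⟩ :=
      Finite.exists_ne_map_eq_of_infinite (fun k : ℕ => G^[k] (⟨t0, ht0⟩ : ↑T))
    wlog hij : i < j generalizing i j
    · exact this j i hne.symm heq.symm (hne.lt_or_gt.resolve_left hij)
    refine ⟨↑(G^[i] (⟨t0, ht0⟩ : ↑T)), j - i, Nat.one_le_iff_ne_zero.mpr (by omega), ?_⟩
    rw [hwalk, ← Function.iterate_add_apply, Nat.sub_add_cancel (le_of_lt hij), ← heq]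
end

section
/- Let h : τ → Option τ. If T is a deadlock cycle, then for every t' ∈ T there exists a unique t ∈ T with h t = some t'. In other words, the waits-for map induces a bijection of the deadlock cycle onto itself. (This captures the paper's observation that in a deadlock cycle each promise's owner is blocked and each task is awaited by exactly one predecessor in the cycle.) -/
/-- In a deadlock cycle, every task is awaited by exactly one task of the
cycle: the waits-for map induces a bijection of the cycle onto itself. -/
theorem stmt_6 {τ : Type*} (h : τ → Option τ) (T : Finset τ)
    (hT : DeadlockCycle h T) :
    ∀ t' ∈ T, ∃! t, t ∈ T ∧ h t = some t' := by
  classical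
  obtain ⟨⟨hne, hwait⟩, hmin⟩ := hT
  -- define f : T → T
  have hf : ∀ t : T, ∃ t' : T, h t = some t' := by
    rintro ⟨t, ht⟩
    obtain ⟨t', ht', heq⟩ := hwait t ht
    exact ⟨⟨t', ht'⟩, heq⟩
  choose f hfspec using hf
  -- f is surjective
  have hsurj : Function.Surjective f := by
    rintro ⟨t', ht'⟩
    by_contra hno
    push_neg at hno
    -- t' is not hit: T \ {t'} is deadlocked and strict subset (or T = {t'})
    have hnothit : ∀ t ∈ T, h t ≠ some t' := by
      intro t ht heq
      exact hno ⟨t, ht⟩ (Subtype.ext (Option.some.inj ((hfspec ⟨t, ht⟩).symm.trans heq)))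
    set S := T.erase t' with hS
    have hSsub : S ⊂ T := Finset.erase_ssubset ht'
    have hSdead : Deadlocked h S := by
      constructor
      · -- S nonempty: t' waits on some t'' ∈ T, t'' ≠ t'
        obtain ⟨t'', ht'', heq⟩ := hwait t' ht'
        have : t'' ≠ t' := fun he => hnothit t' ht' (he ▸ heq)
        exact ⟨t'', Finset.mem_erase.mpr ⟨this, ht''⟩⟩
      · intro t ht
        have htT : t ∈ T := Finset.mem_of_mem_erase ht
        obtain ⟨t'', ht'', heq⟩ := hwait t htT
        have : t'' ≠ t' := fun he => hnothit t htT (he ▸ heq)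
        exact ⟨t'', Finset.mem_erase.mpr ⟨this, ht''⟩, heq⟩
    exact hmin S hSsub hSdead.1 hSdead
  have hinj : Function.Injective f := Finite.injective_iff_surjective.mpr hsurj
  intro t' ht'
  obtain ⟨t, hft⟩ := hsurj ⟨t', ht'⟩
  refine ⟨t, ⟨t.2, by simp [hfspec t, hft]⟩, ?_⟩
  rintro s ⟨hs, hseq⟩
  have : f ⟨s, hs⟩ = ⟨t', ht'⟩ := Subtype.ext (Option.some.inj ((hfspec ⟨s, hs⟩).symm.trans hseq))
  have := hinj (this.trans hft.symm)
  exact congrArg Subtype.val this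
end

section
/- Let h : τ → Option τ. If T is a deadlock cycle, then for all tasks t ∈ T and s ∈ T there exists a natural number n with walk t n = some s; that is, the detector's traversal from any member of a deadlock cycle visits every member of the cycle. (This is the minimality argument underlying the paper's Lemma 5.5: if some member were never visited, a smaller deadlocked set would exist, violating minimality.) -/
/-- The detector's traversal from any member of a deadlock cycle visits
every member of the cycle. -/
theorem stmt_7 {τ : Type*} (h : τ → Option τ) (T : Finset τ)
    (hT : DeadlockCycle h T) :
    ∀ t ∈ T, ∀ s ∈ T, ∃ n : ℕ, walk h t n = some s := by
  classical
  intro t ht s hs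
  obtain ⟨⟨-, hwait⟩, hmin⟩ := hT
  set S : Finset τ := T.filter (fun s => ∃ n, walk h t n = some s) with hS
  have hSsub : S ⊆ T := Finset.filter_subset _ _
  have htS : t ∈ S := Finset.mem_filter.mpr ⟨ht, 0, rfl⟩
  have hSd : Deadlocked h S := by
    refine ⟨⟨t, htS⟩, ?_⟩
    intro u hu
    obtain ⟨huT, n, hn⟩ := Finset.mem_filter.mp hu
    obtain ⟨u', hu'T, hu'⟩ := hwait u huT
    refine ⟨u', Finset.mem_filter.mpr ⟨hu'T, n + 1, ?_⟩, hu'⟩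
    simp [walk, hn, hu']
  have hST : S = T := by
    by_contra hne
    exact hmin S (lt_of_le_of_ne hSsub hne) ⟨t, htS⟩ hSd
  have := hST ▸ hs
  exact (Finset.mem_filter.mp this).2
end

section
/- Let τ be a type of tasks and π a type of promises, let w : τ → Option π and o : π → Option τ, and let h t = (w t).bind o. If T is a deadlock cycle, then every t ∈ T has w t = some p for exactly one promise p; the map assigning to each t ∈ T this promise is injective on T; o is injective on the image set P = {p | ∃ t ∈ T, w t = some p}; and P has the same cardinality as T. (The paper's claim that a deadlock of n tasks is associated with exactly n promises, each awaited by one task in the cycle and owned by another.) -/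
/-- A deadlock cycle of tasks `T` is associated with exactly `T.card` promises:
each task awaits exactly one promise, distinct tasks await distinct promises,
the owner map is injective on the set of awaited promises, and that set has
the same cardinality as `T`. -/
theorem stmt_9 {τ π : Type*}
    (w : τ → Option π) (o : π → Option τ) (h : τ → Option τ)
    (hh : ∀ t, h t = (w t).bind o)
    (T : Finset τ) (hT : DeadlockCycle h T) :
    (∀ t ∈ T, ∃! p : π, w t = some p) ∧
    ∃ f : τ → π, (∀ t ∈ T, w t = some (f t)) ∧ Set.InjOn f ↑T ∧
      Set.InjOn o {p : π | ∃ t ∈ T, w t = some p} ∧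
      Set.ncard {p : π | ∃ t ∈ T, w t = some p} = T.card := by
  classical
  obtain ⟨⟨hne, hdl⟩, hmin⟩ := hT
  set g : τ → τ := fun t => (h t).getD t with hg
  have hgmem : ∀ t ∈ T, g t ∈ T ∧ h t = some (g t) := by
    intro t ht
    obtain ⟨t', ht', he⟩ := hdl t ht
    constructor
    · simpa [hg, he] using ht'
    · simp [hg, he]
  have himg : T.image g = T := by
    have hsub : T.image g ⊆ T := by
      intro s hs
      obtain ⟨t, ht, rfl⟩ := Finset.mem_image.mp hs
      exact (hgmem t ht).1
    by_contra hne2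
    have hss : T.image g ⊂ T := hsub.ssubset_of_ne hne2
    refine hmin _ hss (hne.image g) ⟨hne.image g, ?_⟩
    intro s hs
    have hsT := hsub hs
    exact ⟨g s, Finset.mem_image_of_mem g hsT, (hgmem _ hsT).2⟩
  have hginj : Set.InjOn g ↑T := Finset.injOn_of_card_image_eq (by rw [himg])
  obtain ⟨t₀, ht₀⟩ := hne
  have hw : ∀ t ∈ T, ∃ p, w t = some p := by
    intro t ht
    have hthis := (hgmem t ht).2
    rw [hh] at hthis
    cases hwt : w t with
    | none => rw [hwt] at hthis; simp at hthis
    | some p => exact ⟨p, rfl⟩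
  haveI : Nonempty π := ⟨(hw t₀ ht₀).choose⟩
  set f : τ → π := fun t => (w t).getD (Classical.arbitrary π) with hf
  have hwf : ∀ t ∈ T, w t = some (f t) := by
    intro t ht
    obtain ⟨p, hp⟩ := hw t ht
    simp [hf, hp]
  have hof : ∀ t ∈ T, o (f t) = some (g t) := by
    intro t ht
    have hthis := (hgmem t ht).2
    rw [hh, hwf t ht] at hthis
    simpa using hthis
  have hfinj : Set.InjOn f ↑T := by
    intro a ha b hb hab
    apply hginj ha hb
    exact Option.some.inj ((hof a ha).symm.trans (by rw [hab, hof b hb]))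
  have hP : {p : π | ∃ t ∈ T, w t = some p} = f '' ↑T := by
    ext p
    constructor
    · rintro ⟨t, ht, hp⟩
      exact ⟨t, ht, Option.some.inj ((hwf t ht).symm.trans hp)⟩
    · rintro ⟨t, ht, rfl⟩
      exact ⟨t, ht, hwf t ht⟩
  refine ⟨?_, f, hwf, hfinj, ?_, ?_⟩
  · intro t ht
    exact ⟨f t, hwf t ht, fun p hp => (Option.some.inj ((hwf t ht).symm.trans hp)).symm⟩
  · rw [hP]
    rintro p ⟨a, ha, rfl⟩ q ⟨b, hb, rfl⟩ hpq
    have hab : g a = g b :=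
      Option.some.inj ((hof a ha).symm.trans (by rw [hpq, hof b hb]))
    rw [hginj ha hb hab]
  · rw [hP, Set.ncard_image_of_injOn hfinj, Set.ncard_coe_finset]
end

section
/- Let τ be a type of tasks and π a type of promises, let w : τ → Option π and o : π → Option τ, and let h t = (w t).bind o. If T is a deadlock cycle with T.card = n, then there exist pairwise distinct tasks t_0, …, t_{n-1} whose set is exactly T and pairwise distinct promises p_0, …, p_{n-1} such that w t_i = some p_i and o p_i = some t_{(i+1) mod n} for every i < n. (This is the paper's description of a deadlock: a cycle of n tasks and n promises such that task t_i awaits p_i while p_i is owned by t_{i+1 mod n}.) -/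
lemma succ_mod_injOn {n i j : ℕ} (hi : i < n) (hj : j < n)
    (e : (i + 1) % n = (j + 1) % n) : i = j := by
  rcases Nat.lt_or_ge (i + 1) n with h1 | h1
  · rw [Nat.mod_eq_of_lt h1] at e
    rcases Nat.lt_or_ge (j + 1) n with h2 | h2
    · rw [Nat.mod_eq_of_lt h2] at e; omega
    · have hje : j + 1 = n := by omega
      rw [hje, Nat.mod_self] at e; omega
  · have hie : i + 1 = n := by omega
    rw [hie, Nat.mod_self] at e
    rcases Nat.lt_or_ge (j + 1) n with h2 | h2
    · rw [Nat.mod_eq_of_lt h2] at e; omega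
    · omega

/-- A deadlock cycle of `n` tasks consists of pairwise distinct tasks
`t_0, …, t_{n-1}` and pairwise distinct promises `p_0, …, p_{n-1}` such that
`t_i` awaits `p_i` while `p_i` is owned by `t_{(i+1) mod n}`. -/
theorem stmt_10 {τ π : Type*} [DecidableEq τ]
    (w : τ → Option π) (o : π → Option τ) (h : τ → Option τ)
    (hh : ∀ t, h t = (w t).bind o)
    (T : Finset τ) (n : ℕ) (hcard : T.card = n)
    (hT : DeadlockCycle h T) :
    ∃ (t : ℕ → τ) (p : ℕ → π),
      (∀ i < n, ∀ j < n, t i = t j → i = j) ∧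
      (∀ i < n, ∀ j < n, p i = p j → i = j) ∧
      (Finset.range n).image t = T ∧
      (∀ i < n, w (t i) = some (p i) ∧ o (p i) = some (t ((i + 1) % n))) := by
  classical
  obtain ⟨⟨hne, hdl⟩, hmin⟩ := hT
  have hg : ∀ x : {x // x ∈ T}, ∃ y : {x // x ∈ T}, h x.val = some y.val := by
    rintro ⟨x, hx⟩
    obtain ⟨y, hy, hxy⟩ := hdl x hx
    exact ⟨⟨y, hy⟩, hxy⟩
  choose g hgspec using hg
  obtain ⟨t0, ht0⟩ := hne
  set a : ℕ → {x // x ∈ T} := fun k => g^[k] ⟨t0, ht0⟩ with ha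
  have hstep : ∀ k, h (a k).val = some (a (k + 1)).val := by
    intro k
    have : a (k + 1) = g (a k) := by
      simp [ha, Function.iterate_succ_apply']
    rw [this]; exact hgspec (a k)
  have hn : 0 < n := by
    rw [← hcard]; exact Finset.card_pos.mpr ⟨t0, ht0⟩
  -- pigeonhole
  have hcard' : T.card < (Finset.range (n + 1)).card := by simp [hcard]
  obtain ⟨i, hi, j, hj, hij, haij⟩ :=
    Finset.exists_ne_map_eq_of_card_lt_of_maps_to hcard'
      (fun k _ => (a k).2 : ∀ k ∈ Finset.range (n + 1), (a k).val ∈ T)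
  -- wlog i < j
  obtain ⟨i, j, hlt, hjn, haij⟩ : ∃ i j, i < j ∧ j ≤ n ∧ a i = a j := by
    simp only [Finset.mem_range] at hi hj
    rcases Nat.lt_or_ge i j with hlt | hge
    · exact ⟨i, j, hlt, by omega, Subtype.ext haij⟩
    · exact ⟨j, i, by omega, by omega, Subtype.ext haij.symm⟩
  set m := j - i with hm
  have hm0 : 0 < m := by omega
  have hperm : a (i + m) = a i := by
    have : i + m = j := by omega
    rw [this]; exact haij.symm
  set t : ℕ → τ := fun k => (a (i + k)).val with htdef
  set C : Finset τ := (Finset.range m).image t with hC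
  have hCsub : C ⊆ T := by
    intro x hx
    simp only [hC, Finset.mem_image] at hx
    obtain ⟨k, _, rfl⟩ := hx
    exact (a (i + k)).2
  have hCne : C.Nonempty := ⟨t 0, by
    simp only [hC, Finset.mem_image]
    exact ⟨0, Finset.mem_range.mpr hm0, rfl⟩⟩
  have hCdl : Deadlocked h C := by
    refine ⟨hCne, ?_⟩
    intro x hx
    simp only [hC, Finset.mem_image, Finset.mem_range] at hx
    obtain ⟨k, hk, rfl⟩ := hx
    rcases Nat.lt_or_ge (k + 1) m with hk1 | hk1
    · refine ⟨t (k + 1), ?_, ?_⟩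
      · simp only [hC, Finset.mem_image, Finset.mem_range]
        exact ⟨k + 1, hk1, rfl⟩
      · exact hstep (i + k)
    · have hkm : k + 1 = m := by omega
      refine ⟨t 0, ?_, ?_⟩
      · simp only [hC, Finset.mem_image, Finset.mem_range]
        exact ⟨0, hm0, rfl⟩
      · have := hstep (i + k)
        rw [show i + k + 1 = i + m by omega, hperm] at this
        exact this
  have hCT : C = T := by
    by_contra hne'
    exact hmin C (lt_of_le_of_ne hCsub hne') hCne hCdl
  have hmn : m = n := by
    have h1 : C.card ≤ m := le_trans Finset.card_image_le (by simp)
    have h2 : C.card = n := by rw [hCT, hcard]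
    omega
  subst hmn
  have himg : (Finset.range m).image t = T := hCT
  have hinj : Set.InjOn t (Finset.range m) := by
    rw [← Finset.card_image_iff, himg, hcard, Finset.card_range]
  have htinj : ∀ i' < m, ∀ j' < m, t i' = t j' → i' = j' := by
    intro i' hi' j' hj' he
    exact hinj (by simpa using hi') (by simpa using hj') he
  have hwrap : ∀ k < m, h (t k) = some (t ((k + 1) % m)) := by
    intro k hk
    rcases Nat.lt_or_ge (k + 1) m with hk1 | hk1
    · rw [Nat.mod_eq_of_lt hk1]
      exact hstep (i + k)
    · have hkm : k + 1 = m := by omega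
      rw [hkm, Nat.mod_self]
      have := hstep (i + k)
      rw [show i + k + 1 = i + m by omega, hperm] at this
      exact this
  have hp : ∀ k, k < m → ∃ p, w (t k) = some p ∧ o p = some (t ((k + 1) % m)) := by
    intro k hk
    have hwk := hwrap k hk
    rw [hh] at hwk
    cases hwq : w (t k) with
    | none => rw [hwq] at hwk; simp at hwk
    | some p =>
        rw [hwq] at hwk
        exact ⟨p, rfl, hwk⟩
  set p : ℕ → π := fun k => if hk : k < m then Classical.choose (hp k hk)
    else Classical.choose (hp 0 hn) with hpdef
  have hpspec : ∀ k < m, w (t k) = some (p k) ∧ o (p k) = some (t ((k + 1) % m)) := by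
    intro k hk
    simp only [hpdef, dif_pos hk]
    exact Classical.choose_spec (hp k hk)
  refine ⟨t, p, htinj, ?_, himg, hpspec⟩
  intro i' hi' j' hj' he
  have h1 := (hpspec i' hi').2
  have h2 := (hpspec j' hj').2
  rw [he, h2] at h1
  have := htinj _ (Nat.mod_lt _ hn) _ (Nat.mod_lt _ hn) (Option.some_injective _ h1.symm)
  exact succ_mod_injOn hi' hj' this
end

section
/- Let h : τ → Option τ. If T is a deadlock cycle and t ∈ T, then the least positive integer n with walk t n = some t exists and equals T.card. (The detector's traversal from a member of a deadlock cycle first returns to its start after exactly as many steps as there are tasks in the cycle.) -/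
/-- The detector's traversal from a member of a deadlock cycle first returns
to its start after exactly `T.card` steps: `T.card` is the least positive `n`
with `walk h t n = some t`. -/
theorem stmt_11 {τ : Type*} (h : τ → Option τ) (T : Finset τ)
    (hT : DeadlockCycle h T) (t : τ) (ht : t ∈ T) :
    IsLeast {n : ℕ | 1 ≤ n ∧ walk h t n = some t} T.card := by
  classical
  obtain ⟨⟨hne, hstep⟩, hmin⟩ := hT
  set g : τ → τ := fun x => (h x).getD x with hg
  have hgmem : ∀ x ∈ T, g x ∈ T := by
    intro x hx
    obtain ⟨y, hy, hxy⟩ := hstep x hx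
    simpa [hg, hxy] using hy
  have hgeq : ∀ x ∈ T, h x = some (g x) := by
    intro x hx
    obtain ⟨y, hy, hxy⟩ := hstep x hx
    simp [hg, hxy]
  have hiter : ∀ n, g^[n] t ∈ T := by
    intro n; induction n with
    | zero => simpa using ht
    | succ n ih => rw [Function.iterate_succ_apply']; exact hgmem _ ih
  have hwalk : ∀ n, walk h t n = some (g^[n] t) := by
    intro n; induction n with
    | zero => simp [walk]
    | succ n ih =>
      rw [walk, ih, Option.bind_some, hgeq _ (hiter n)]
      exact congrArg some (Function.iterate_succ_apply' g n t).symm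
  -- a generic lemma: any orbit-segment set closed under g that is a subset of T
  -- and nonempty must equal T by minimality
  have hfull : ∀ C : Finset τ, C ⊆ T → C.Nonempty →
      (∀ x ∈ C, g x ∈ C) → C = T := by
    intro C hCT hCne hCcl
    by_contra hne'
    have hss : C ⊂ T := (Finset.ssubset_iff_subset_ne).2 ⟨hCT, hne'⟩
    exact hmin C hss hCne ⟨hCne, fun x hx => ⟨g x, hCcl x hx, hgeq x (hCT hx)⟩⟩
  -- t is periodic
  have hper : ∃ n, 0 < n ∧ g^[n] t = t := by
    obtain ⟨i, j, hij, heq⟩ : ∃ i j, i < j ∧ g^[i] t = g^[j] t := by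
      obtain ⟨a, b, hab, heq⟩ :=
        Finite.exists_ne_map_eq_of_infinite (fun n : ℕ => (⟨g^[n] t, hiter n⟩ : T))
      have heq' : g^[a] t = g^[b] t := by simpa using congrArg Subtype.val heq
      rcases hab.lt_or_gt with hlt | hlt
      · exact ⟨a, b, hlt, heq'⟩
      · exact ⟨b, a, hlt, heq'.symm⟩
    set d := j - i with hd
    have hdpos : 0 < d := by omega
    have hji : i + d = j := by omega
    set C : Finset τ := (Finset.range d).image (fun k => g^[i + k] t) with hC
    have hCT : C ⊆ T := by
      intro x hx
      simp only [hC, Finset.mem_image] at hx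
      obtain ⟨k, _, rfl⟩ := hx
      exact hiter _
    have hCne : C.Nonempty := ⟨g^[i] t, by
      simp only [hC, Finset.mem_image]
      exact ⟨0, Finset.mem_range.2 hdpos, by simp⟩⟩
    have hCcl : ∀ x ∈ C, g x ∈ C := by
      intro x hx
      simp only [hC, Finset.mem_image, Finset.mem_range] at hx ⊢
      obtain ⟨k, hk, rfl⟩ := hx
      rcases Nat.lt_or_ge (k + 1) d with hk1 | hk1
      · exact ⟨k + 1, hk1, by
          rw [show i + (k + 1) = (i + k) + 1 from by omega]
          exact Function.iterate_succ_apply' g (i + k) t⟩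
      · refine ⟨0, hdpos, ?_⟩
        have hkd : k + 1 = d := by omega
        have : g (g^[i + k] t) = g^[i + k + 1] t :=
          (Function.iterate_succ_apply' g (i + k) t).symm
        rw [this]
        have : i + k + 1 = j := by omega
        rw [this, ← heq]
        simp
    have hCfull : C = T := hfull C hCT hCne hCcl
    have htc : t ∈ C := hCfull ▸ ht
    simp only [hC, Finset.mem_image, Finset.mem_range] at htc
    obtain ⟨k, hk, hkt⟩ := htc
    refine ⟨d, hdpos, ?_⟩
    have h1 : g^[d] t = g^[d] (g^[i + k] t) := by rw [hkt]
    have h2 : g^[d] (g^[i + k] t) = g^[k] (g^[d + i] t) := by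
      rw [← Function.iterate_add_apply, ← Function.iterate_add_apply]
      congr 1; omega
    have h3 : g^[d + i] t = g^[i] t := by
      rw [show d + i = j by omega, ← heq]
    rw [h1, h2, h3, ← Function.iterate_add_apply,
      show k + i = i + k by omega, hkt]
  -- least period
  set p := Nat.find hper with hp
  have hppos : 0 < p := (Nat.find_spec hper).1
  have hpt : g^[p] t = t := (Nat.find_spec hper).2
  -- the orbit of t under g has exactly p elements and equals T
  set O : Finset τ := (Finset.range p).image (fun k => g^[k] t) with hO
  have hOT : O ⊆ T := by
    intro x hx
    simp only [hO, Finset.mem_image] at hx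
    obtain ⟨k, _, rfl⟩ := hx
    exact hiter _
  have hOne : O.Nonempty := ⟨t, by
    simp only [hO, Finset.mem_image]
    exact ⟨0, Finset.mem_range.2 hppos, by simp⟩⟩
  have hOcl : ∀ x ∈ O, g x ∈ O := by
    intro x hx
    simp only [hO, Finset.mem_image, Finset.mem_range] at hx ⊢
    obtain ⟨k, hk, rfl⟩ := hx
    rcases Nat.lt_or_ge (k + 1) p with hk1 | hk1
    · exact ⟨k + 1, hk1, Function.iterate_succ_apply' g k t⟩
    · refine ⟨0, hppos, ?_⟩
      have : k + 1 = p := by omega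
      rw [show g (g^[k] t) = g^[k+1] t from (Function.iterate_succ_apply' g k t).symm,
        this, hpt]
      simp
  have hOfull : O = T := hfull O hOT hOne hOcl
  have key : ∀ a b : ℕ, a < b → b < p → g^[a] t = g^[b] t → False := by
    intro a b hlt hb hab
    have h1 : g^[p - b] (g^[a] t) = g^[p - b] (g^[b] t) := by rw [hab]
    rw [← Function.iterate_add_apply, ← Function.iterate_add_apply,
      show p - b + b = p from by omega, hpt] at h1
    have := Nat.find_min' hper ⟨by omega, h1⟩
    omega
  have hinj : Set.InjOn (fun k => g^[k] t) (Finset.range p) := by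
    intro a ha b hb hab
    simp only [Finset.coe_range, Set.mem_Iio] at ha hb
    dsimp only at hab
    rcases lt_trichotomy a b with hlt | heq' | hlt
    · exact (key a b hlt hb hab).elim
    · exact heq'
    · exact (key b a hlt ha hab.symm).elim
  have hcard : T.card = p := by
    rw [← hOfull, hO, Finset.card_image_of_injOn hinj, Finset.card_range]
  constructor
  · refine ⟨by omega, ?_⟩
    rw [hwalk, hcard, hpt]
  · intro n hn
    obtain ⟨hn1, hn2⟩ := hn
    rw [hwalk] at hn2
    have : g^[n] t = t := Option.some.inj hn2
    rw [hcard]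
    exact Nat.find_min' hper ⟨by omega, this⟩
end

section
/- Let h : τ → Option τ and let t0 be a task. If there exists a natural number n with walk t0 n = none, then t0 belongs to no deadlocked finite set of tasks. (Soundness of the detector's break conditions: reaching a fulfilled promise or an unblocked task during the traversal proves that committing to the blocking wait cannot create a deadlock involving t0.) -/
/-! A deadlocked set is closed under the waits-for map, so a traversal starting inside it never
leaves it and in particular never reaches `none`. -/

theorem exists_mem_walk_eq_some {τ : Type*} {h : τ → Option τ} {S : Set τ}
    (hS : ∀ t ∈ S, ∃ t' ∈ S, h t = some t') {t0 : τ} (ht0 : t0 ∈ S) (n : ℕ) :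
    ∃ t ∈ S, walk h t0 n = some t := by
  induction n with
  | zero => exact ⟨t0, ht0, rfl⟩
  | succ n ih =>
    obtain ⟨t, htS, hwalk⟩ := ih
    obtain ⟨t', ht'S, hht⟩ := hS t htS
    refine ⟨t', ht'S, ?_⟩
    rw [walk, hwalk, Option.bind_some, hht]

theorem Deadlocked.walk_ne_none {τ : Type*} {h : τ → Option τ} {T : Finset τ}
    (hT : Deadlocked h T) {t0 : τ} (ht0 : t0 ∈ T) (n : ℕ) : walk h t0 n ≠ none := by
  obtain ⟨t, -, hwalk⟩ := exists_mem_walk_eq_some (S := (T : Set τ)) hT.2 ht0 n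
  simp [hwalk]

/-- If the traversal from `t0` ever reaches `none` (a fulfilled promise or an
unblocked task), then `t0` belongs to no deadlocked finite set of tasks. -/
theorem stmt_12 {τ : Type*} (h : τ → Option τ) (t0 : τ)
    (hnone : ∃ n : ℕ, walk h t0 n = none) :
    ∀ T : Finset τ, Deadlocked h T → t0 ∉ T := by
  intro T hT ht0
  obtain ⟨n, hn⟩ := hnone
  exact hT.walk_ne_none ht0 n hn
end

section
/- Let α be a type, f : α → α a function, and T : Finset α a nonempty finite set that is closed under f (for all t ∈ T, f t ∈ T) and minimal with these properties (no nonempty strict subset of T is closed under f). Then f maps T bijectively onto T (Set.BijOn f ↑T ↑T), and for every t ∈ T there exists n with 1 ≤ n ≤ T.card and f^[n] t = t. (Total-function core of the paper's Lemma 5.5 and Theorem 5.6: a minimal nonempty invariant finite set of a deterministic transition map is a single cycle, so iteration from any of its points returns within card-many steps.) -/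
/-- A minimal nonempty finite set closed under a function `f` is a single
cycle: `f` maps it bijectively onto itself, and iteration from any of its
points returns within `T.card` steps. -/
theorem stmt_14 {α : Type*} (f : α → α) (T : Finset α)
    (hne : T.Nonempty) (hclosed : ∀ t ∈ T, f t ∈ T)
    (hmin : ∀ S : Finset α, S ⊂ T → S.Nonempty → ¬ ∀ t ∈ S, f t ∈ S) :
    Set.BijOn f ↑T ↑T ∧ ∀ t ∈ T, ∃ n : ℕ, 1 ≤ n ∧ n ≤ T.card ∧ f^[n] t = t := by
  classical
  -- Step 1: T.image f = T
  have hsub : T.image f ⊆ T := by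
    intro x hx
    obtain ⟨t, ht, rfl⟩ := Finset.mem_image.mp hx
    exact hclosed t ht
  have himg : T.image f = T := by
    by_contra h
    have hss : T.image f ⊂ T := ⟨hsub, fun h' => h (le_antisymm hsub h')⟩
    refine hmin _ hss (hne.image f) ?_
    intro x hx
    exact Finset.mem_image_of_mem f (hsub hx)
  have hinj : Set.InjOn f ↑T := by
    apply Finset.injOn_of_card_image_eq
    rw [himg]
  have hmaps : Set.MapsTo f ↑T ↑T := fun x hx => hclosed x hx
  have hsurj : Set.SurjOn f ↑T ↑T := by
    rw [Set.SurjOn, ← Finset.coe_image, himg]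
  refine ⟨⟨hmaps, hinj, hsurj⟩, ?_⟩
  intro t ht
  -- iterates stay in T
  have hiter : ∀ k, f^[k] t ∈ T := by
    intro k
    induction k with
    | zero => simpa using ht
    | succ k ih => rw [Function.iterate_succ_apply']; exact hclosed _ ih
  -- Step 2: orbit is all of T
  have horb : ∃ n : ℕ, 1 ≤ n ∧ f^[n] t = t := by
    set S : Finset α := T.filter (fun x => ∃ n, 1 ≤ n ∧ f^[n] t = x) with hS
    have hSsub : S ⊆ T := Finset.filter_subset _ _
    have hSne : S.Nonempty := by
      refine ⟨f t, Finset.mem_filter.mpr ⟨hclosed t ht, ?_⟩⟩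
      exact ⟨1, le_refl 1, rfl⟩
    have hSclosed : ∀ x ∈ S, f x ∈ S := by
      intro x hx
      obtain ⟨hxT, n, hn1, hnx⟩ := Finset.mem_filter.mp hx
      refine Finset.mem_filter.mpr ⟨hclosed x hxT, ?_⟩
      exact ⟨n + 1, Nat.le_add_left 1 n, by rw [Function.iterate_succ_apply', hnx]⟩
    have hST : S = T := by
      by_contra h
      exact hmin S ⟨hSsub, fun h' => h (le_antisymm hSsub h')⟩ hSne hSclosed
    have : t ∈ S := hST ▸ ht
    obtain ⟨_, n, hn1, hnt⟩ := Finset.mem_filter.mp this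
    exact ⟨n, hn1, hnt⟩
  -- take minimal n
  set m := Nat.find horb with hm
  obtain ⟨hm1, hmt⟩ := Nat.find_spec horb
  refine ⟨m, hm1, ?_, hmt⟩
  -- iterates f^[k] t for k < m are distinct
  have key : ∀ i j : ℕ, i < j → j < m → f^[i] t = f^[j] t → False := by
    intro i j hlt hj hij
    have h1 : f^[m - j + i] t = f^[m - j + j] t := by
      rw [Function.iterate_add_apply, Function.iterate_add_apply, hij]
    rw [Nat.sub_add_cancel (le_of_lt hj), hmt] at h1
    exact Nat.find_min horb (show m - j + i < m by omega) ⟨by omega, h1⟩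
  have hinj' : Set.InjOn (fun k => f^[k] t) ↑(Finset.range m) := by
    intro i hi j hj hij
    simp only [Finset.coe_range, Set.mem_Iio] at hi hj
    simp only at hij
    rcases Nat.lt_trichotomy i j with h | h | h
    · exact absurd hij (fun hh => key i j h hj hh)
    · exact h
    · exact absurd hij.symm (fun hh => key j i h hi hh)
  calc m = ((Finset.range m).image (fun k => f^[k] t)).card := by
        rw [Finset.card_image_of_injOn hinj', Finset.card_range]
    _ ≤ T.card := Finset.card_le_card (by
        intro x hx
        obtain ⟨k, _, rfl⟩ := Finset.mem_image.mp hx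
        exact hiter k)
end
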